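/- For the slit map s̃ₓ(z) = x + √((z−x)² − 1), there exists an absolute constant C > 0 such that for all z ∈ ℍ, ∫_{−∞}^{∞} |s̃ₓ′(z) − 1| dx < C / Im z. -/

import Mathlib

open Complex MeasureTheory Filter

/-- Complex square root with the branch chosen in the closed upper half-plane. -/
noncomputable def csqrtH (w : ℂ) : ℂ :=
  if 0 ≤ (w ^ (1/2 : ℂ)).im then w ^ (1/2 : ℂ) else -(w ^ (1/2 : ℂ))

/-- The slit map at `x`: `s̃ₓ(z) = x + √((z-x)² - 1)`, branch mapping ℍ into ℍ. -/
noncomputable def slitAt (x : ℝ) (z : ℂ) : ℂ := x + csqrtH ((z - x) ^ 2 - 1)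

/-- The complex derivative of the slit map at `x`: `(z-x)/√((z-x)² - 1)`. -/
noncomputable def slitDerivAt (x : ℝ) (z : ℂ) : ℂ := (z - x) / csqrtH ((z - x) ^ 2 - 1)


/-!
Write `w = z - x` and `S = √(w² - 1)`. Then `s̃ₓ'(z) - 1 = (w - S)/S = 1/(S (w + S))`, and since
`Re S · Im S = Re w · Im w` the chosen branch puts `S` in the quadrant of `w`, so `|w + S| ≥ |w|`
and `|s̃ₓ'(z) - 1| ≤ 1/(|w| |S|)`. Where `|w| ≥ 2` we have `|S| ≥ |w|/2`, a Cauchy kernel of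
total mass `2π / Im z`. Where `|w| < 2`, `|S|² = |w - 1| |w + 1| ≥ min(|Re w - 1|, |Re w + 1|)`
and `|w| ≥ Im z`, leaving two integrable singularities `|x - (Re z ± 1)|^{-1/2} / Im z`.
-/

open Real

lemma csqrtH_sq (w : ℂ) : csqrtH w ^ 2 = w := by
  unfold csqrtH
  split_ifs <;> simp

lemma csqrtH_im_nonneg (w : ℂ) : 0 ≤ (csqrtH w).im := by
  unfold csqrtH
  split_ifs with h
  · exact h
  · simpa using (not_le.mp h).le

@[fun_prop]
lemma measurable_csqrtH : Measurable csqrtH := by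
  have hpow : Measurable fun w : ℂ => w ^ (1 / 2 : ℂ) := by fun_prop
  exact Measurable.ite (measurableSet_le measurable_const (measurable_im.comp hpow)) hpow hpow.neg

lemma measurable_slitDerivAt (z : ℂ) : Measurable fun x : ℝ => slitDerivAt x z := by
  unfold slitDerivAt
  fun_prop

section SquareRoot

variable {w S : ℂ}

lemma im_pos_of_sq_eq_sq_sub_one (hS : S ^ 2 = w ^ 2 - 1) (hw : 0 < w.im) (hSim : 0 ≤ S.im) :
    0 < S.im := by
  have hre := congrArg re hS
  have him := congrArg im hS
  simp only [sq, mul_re, mul_im, sub_re, sub_im, one_re, one_im] at hre him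
  refine hSim.lt_of_ne fun h => ?_
  rw [← h] at hre him
  have : w.re = 0 := by nlinarith
  nlinarith

lemma norm_le_norm_add_of_sq_eq_sq_sub_one (hS : S ^ 2 = w ^ 2 - 1) (hw : 0 < w.im)
    (hSim : 0 ≤ S.im) : ‖w‖ ≤ ‖w + S‖ := by
  have hSpos := im_pos_of_sq_eq_sq_sub_one hS hw hSim
  have him := congrArg im hS
  simp only [sq, mul_im, sub_im, one_im] at him
  have hre : 0 ≤ w.re * S.re := by
    have : w.re * S.re * S.im = w.re ^ 2 * w.im := by linear_combination w.re * him / 2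
    nlinarith [mul_nonneg (sq_nonneg w.re) hw.le]
  rw [← sq_le_sq₀ (norm_nonneg _) (norm_nonneg _), Complex.sq_norm, Complex.sq_norm, normSq_apply,
    normSq_apply]
  simp only [add_re, add_im]
  nlinarith [mul_nonneg hw.le hSim]

lemma norm_div_sub_one_le (hS : S ^ 2 = w ^ 2 - 1) (hw : 0 < w.im) (hSim : 0 ≤ S.im) :
    ‖w / S - 1‖ ≤ (‖w‖ * ‖S‖)⁻¹ := by
  have hS0 : S ≠ 0 := by
    rintro rfl; simpa using im_pos_of_sq_eq_sq_sub_one hS hw le_rfl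
  have hwS : (w - S) * (w + S) = 1 := by linear_combination -hS
  have hsum := norm_le_norm_add_of_sq_eq_sq_sub_one hS hw hSim
  have hinv : ‖w - S‖ = ‖w + S‖⁻¹ :=
    eq_inv_of_mul_eq_one_left (by rw [← norm_mul, hwS, norm_one])
  have hw0 : 0 < ‖w‖ := norm_pos_iff.mpr (by rintro rfl; simp at hw)
  calc ‖w / S - 1‖ = (‖w + S‖ * ‖S‖)⁻¹ := by
        rw [div_sub_one hS0, norm_div, hinv, mul_inv, div_eq_mul_inv]
    _ ≤ (‖w‖ * ‖S‖)⁻¹ := by gcongr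

lemma inv_norm_mul_le_of_two_le_norm (hS : S ^ 2 = w ^ 2 - 1) (hw : 2 ≤ ‖w‖) :
    (‖w‖ * ‖S‖)⁻¹ ≤ 2 * (‖w‖ ^ 2)⁻¹ := by
  have hnorm : ‖w‖ ^ 2 - 1 ≤ ‖S‖ ^ 2 := by
    calc ‖w‖ ^ 2 - 1 = ‖w ^ 2‖ - ‖(1 : ℂ)‖ := by rw [norm_pow, norm_one]
      _ ≤ ‖w ^ 2 - 1‖ := norm_sub_norm_le _ _
      _ = ‖S‖ ^ 2 := by rw [← hS, norm_pow]
  have : ‖w‖ / 2 ≤ ‖S‖ := by nlinarith [norm_nonneg S]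
  rw [← inv_inv (2 : ℝ), ← mul_inv]
  exact inv_anti₀ (by positivity) (by nlinarith)

lemma min_abs_le_abs_mul_abs (u : ℝ) : min |u - 1| |u + 1| ≤ |u - 1| * |u + 1| := by
  rcases le_total 1 |u + 1| with h | h
  · exact (min_le_left _ _).trans (le_mul_of_one_le_right (abs_nonneg _) h)
  · have : 1 ≤ |u - 1| := by
      rw [abs_le] at h; rw [le_abs]; right; linarith
    exact (min_le_right _ _).trans (le_mul_of_one_le_left (abs_nonneg _) this)

lemma inv_norm_mul_le_rpow (hS : S ^ 2 = w ^ 2 - 1) (hw : 0 < w.im) (h₁ : w.re ≠ 1)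
    (h₂ : w.re ≠ -1) :
    (‖w‖ * ‖S‖)⁻¹ ≤ w.im⁻¹ * (|w.re - 1| ^ (-(1 / 2) : ℝ) + |w.re + 1| ^ (-(1 / 2) : ℝ)) := by
  set m := min |w.re - 1| |w.re + 1|
  have hm : 0 < m :=
    lt_min (abs_pos.mpr (sub_ne_zero.mpr h₁)) (abs_pos.mpr (by contrapose! h₂; linarith))
  have hmS : m ≤ ‖S‖ ^ 2 := by
    calc m ≤ |w.re - 1| * |w.re + 1| := min_abs_le_abs_mul_abs _
      _ ≤ ‖w - 1‖ * ‖w + 1‖ :=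
          mul_le_mul (by simpa using abs_re_le_norm (w - 1)) (by simpa using abs_re_le_norm (w + 1))
            (abs_nonneg _) (norm_nonneg _)
      _ = ‖S‖ ^ 2 := by rw [← norm_mul, ← norm_pow, hS]; ring_nf
  have hsqrt : √m ≤ ‖S‖ := (Real.sqrt_le_sqrt hmS).trans_eq (Real.sqrt_sq (norm_nonneg _))
  have hmin : m ^ (-(1 / 2) : ℝ) ≤ |w.re - 1| ^ (-(1 / 2) : ℝ) + |w.re + 1| ^ (-(1 / 2) : ℝ) := by
    rcases min_choice |w.re - 1| |w.re + 1| with h | h <;> rw [show m = _ from h] <;>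
      linarith [rpow_nonneg (abs_nonneg (w.re - 1)) (-(1 / 2) : ℝ),
        rpow_nonneg (abs_nonneg (w.re + 1)) (-(1 / 2) : ℝ)]
  calc (‖w‖ * ‖S‖)⁻¹ ≤ (w.im * √m)⁻¹ := by
        gcongr
        exact (le_abs_self _).trans (abs_im_le_norm w)
    _ = w.im⁻¹ * m ^ (-(1 / 2) : ℝ) := by rw [mul_inv, sqrt_eq_rpow, rpow_neg hm.le]
    _ ≤ _ := by gcongr

end SquareRoot

lemma locallyIntegrable_abs_rpow {r : ℝ} (hr : -1 < r) :
    LocallyIntegrable fun t : ℝ => |t| ^ r :=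
  locallyIntegrable_of_norm_le_rpow (C := 1) (α := -r) (by simp) (by simp; linarith)
    (ae_of_all _ fun t => by simp [abs_rpow_of_nonneg (abs_nonneg t)])
    (by fun_prop : Measurable fun t : ℝ => |t| ^ r).aestronglyMeasurable

/-- The radius `3` covers `|Re w ± 1|` whenever `‖w‖ < 2`. -/
noncomputable def truncInvSqrt : ℝ → ℝ :=
  (Set.Icc (-3) 3).indicator fun t => |t| ^ (-(1 / 2) : ℝ)

lemma truncInvSqrt_of_abs_le {t : ℝ} (ht : |t| ≤ 3) : truncInvSqrt t = |t| ^ (-(1 / 2) : ℝ) :=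
  Set.indicator_of_mem (Set.mem_Icc.mpr (abs_le.mp ht)) _

lemma truncInvSqrt_nonneg (t : ℝ) : 0 ≤ truncInvSqrt t :=
  Set.indicator_nonneg (fun t _ => rpow_nonneg (abs_nonneg t) _) t

lemma integrable_truncInvSqrt : Integrable truncInvSqrt :=
  ((locallyIntegrable_abs_rpow (by norm_num)).integrableOn_isCompact
    isCompact_Icc).integrable_indicator measurableSet_Icc

lemma inv_norm_mul_le_of_sq_eq_sq_sub_one {w S : ℂ} (hS : S ^ 2 = w ^ 2 - 1) (hw : 0 < w.im)
    (h₁ : w.re ≠ 1) (h₂ : w.re ≠ -1) :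
    (‖w‖ * ‖S‖)⁻¹ ≤
      2 * (‖w‖ ^ 2)⁻¹ + w.im⁻¹ * (truncInvSqrt (w.re - 1) + truncInvSqrt (w.re + 1)) := by
  have hfar : 0 ≤ 2 * (‖w‖ ^ 2)⁻¹ := by positivity
  have hnear : 0 ≤ w.im⁻¹ * (truncInvSqrt (w.re - 1) + truncInvSqrt (w.re + 1)) :=
    mul_nonneg (inv_nonneg.mpr hw.le) (add_nonneg (truncInvSqrt_nonneg _) (truncInvSqrt_nonneg _))
  rcases le_or_gt 2 ‖w‖ with hw2 | hw2
  · linarith [inv_norm_mul_le_of_two_le_norm hS hw2]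
  · have hre : |w.re| < 2 := (abs_re_le_norm w).trans_lt hw2
    rw [abs_lt] at hre
    rw [truncInvSqrt_of_abs_le (abs_le.mpr ⟨by linarith, by linarith⟩),
      truncInvSqrt_of_abs_le (abs_le.mpr ⟨by linarith, by linarith⟩)]
    linarith [inv_norm_mul_le_rpow hS hw h₁ h₂]

lemma inv_norm_sub_ofReal_sq_eq_cauchyPDFReal {z : ℂ} (hz : 0 < z.im) (x : ℝ) :
    (‖z - x‖ ^ 2)⁻¹ = π / z.im * ProbabilityTheory.cauchyPDFReal z.re z.im.toNNReal x := by
  rw [ProbabilityTheory.cauchyPDFReal_def, Real.coe_toNNReal _ hz.le, Complex.sq_norm, normSq_apply]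
  simp only [sub_re, ofReal_re, sub_im, ofReal_im, sub_zero]
  field_simp
  ring

section Majorant

variable {z : ℂ}

lemma integrable_inv_norm_sub_ofReal_sq (hz : 0 < z.im) :
    Integrable fun x : ℝ => (‖z - x‖ ^ 2)⁻¹ := by
  simp_rw [inv_norm_sub_ofReal_sq_eq_cauchyPDFReal hz]
  exact ProbabilityTheory.integrable_cauchyPDFReal _ |>.const_mul _

lemma integral_inv_norm_sub_ofReal_sq (hz : 0 < z.im) :
    ∫ x : ℝ, (‖z - x‖ ^ 2)⁻¹ = π / z.im := by
  simp_rw [inv_norm_sub_ofReal_sq_eq_cauchyPDFReal hz]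
  rw [integral_const_mul, ProbabilityTheory.integral_cauchyPDFReal_eq_one _ (by simpa using hz),
    mul_one]

noncomputable def slitMajorant (z : ℂ) (x : ℝ) : ℝ :=
  2 * (‖z - x‖ ^ 2)⁻¹ + z.im⁻¹ * (truncInvSqrt (z.re - 1 - x) + truncInvSqrt (z.re + 1 - x))

lemma integrable_slitMajorant (hz : 0 < z.im) : Integrable (slitMajorant z) :=
  ((integrable_inv_norm_sub_ofReal_sq hz).const_mul 2).add
    ((integrable_truncInvSqrt.comp_sub_left _).add (integrable_truncInvSqrt.comp_sub_left _)
      |>.const_mul _)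

lemma integral_slitMajorant (hz : 0 < z.im) :
    ∫ x, slitMajorant z x = (2 * π + 2 * ∫ t, truncInvSqrt t) / z.im := by
  have hk (c : ℝ) : Integrable fun x => truncInvSqrt (c - x) :=
    integrable_truncInvSqrt.comp_sub_left c
  have hsum : Integrable fun x => truncInvSqrt (z.re - 1 - x) + truncInvSqrt (z.re + 1 - x) :=
    (hk _).add (hk _)
  unfold slitMajorant
  rw [integral_add ((integrable_inv_norm_sub_ofReal_sq hz).const_mul 2) (hsum.const_mul _),
    integral_const_mul, integral_const_mul, integral_add (hk _) (hk _), integral_sub_left_eq_self,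
    integral_sub_left_eq_self, integral_inv_norm_sub_ofReal_sq hz]
  ring

lemma norm_slitDerivAt_sub_one_le (hz : 0 < z.im) {x : ℝ} (h₁ : x ≠ z.re - 1)
    (h₂ : x ≠ z.re + 1) : ‖slitDerivAt x z - 1‖ ≤ slitMajorant z x := by
  have hS := csqrtH_sq ((z - x) ^ 2 - 1)
  have hw : 0 < (z - x).im := by simpa using hz
  calc ‖slitDerivAt x z - 1‖ ≤ (‖z - x‖ * ‖csqrtH ((z - x) ^ 2 - 1)‖)⁻¹ :=
        norm_div_sub_one_le hS hw (csqrtH_im_nonneg _)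
    _ ≤ slitMajorant z x := by
        have := inv_norm_mul_le_of_sq_eq_sq_sub_one hS hw (by simp; grind) (by simp; grind)
        simp only [sub_re, ofReal_re, sub_im, ofReal_im, sub_zero] at this
        unfold slitMajorant
        convert this using 5 <;> ring

end Majorant

/-- `∫ℝ |s̃ₓ'(z) - 1| dx < C / Im z` uniformly over `z ∈ ℍ`. -/
theorem stmt_1 :
    ∃ C > (0:ℝ), ∀ z : ℂ, 0 < z.im →
      Integrable (fun x : ℝ => ‖slitDerivAt x z - 1‖) ∧
      (∫ x : ℝ, ‖slitDerivAt x z - 1‖) < C / z.im := by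
  set K := ∫ t, truncInvSqrt t
  have hK : 0 ≤ K := integral_nonneg truncInvSqrt_nonneg
  refine ⟨2 * π + 2 * K + 1, by positivity, fun z hz => ?_⟩
  have hbound : ∀ᵐ x : ℝ, ‖slitDerivAt x z - 1‖ ≤ slitMajorant z x := by
    filter_upwards [volume.ae_ne (z.re - 1), volume.ae_ne (z.re + 1)] with x h₁ h₂
    exact norm_slitDerivAt_sub_one_le hz h₁ h₂
  have hint : Integrable fun x : ℝ => ‖slitDerivAt x z - 1‖ :=
    (integrable_slitMajorant hz).mono'
      ((measurable_slitDerivAt z).sub_const 1).norm.aestronglyMeasurable (by simpa using hbound)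
  refine ⟨hint, (integral_mono_ae hint (integrable_slitMajorant hz) hbound).trans_lt ?_⟩
  rw [integral_slitMajorant hz]
  exact div_lt_div_of_pos_right (lt_add_one _) hz
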